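/- (Composite Bäcklund transformation s₋s₂ for Painlevé III′.) Let (q, p, H) solve the Painlevé III′ Hamiltonian system with parameters v1, v2 ∈ ℂ on an open set U ⊆ ℂ with 0 ∉ U, and assume p(s) ≠ 0 and p(s) ≠ 1 for all s ∈ U. Then there exist functions (q̃, p̃) solving the Painlevé III′ Hamiltonian system with parameters (−v1, v2) on −U := {−s : s ∈ U} whose Hamiltonian H̃ satisfies (−s)·H̃(−s) = s·H(s) − s for all s ∈ U. -/

import Mathlib

/-! The composite factors as `s₂` followed by `s₋`. With `a = p (p - 1)` and
`c = (v1 + v2) / 2 - v1 p` one has `s H = a q² + c q + s p`, and `Q = q + c / a` (defined exactly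
where `p ≠ 0, 1`) satisfies `a Q² - c Q = a q² + c q`: so `s₂` keeps `p` and `H` and flips the sign
of `(v1, v2)`. The symmetry `s₋ : s ↦ -s, q ↦ -q, p ↦ 1 - p` flips the sign of `v2` alone and
lowers `s H` by `s`. -/

open Complex

/-- `(q, p, H)` solves the Painlevé III′ Hamiltonian system with parameters
`v1, v2` on an open set `U ⊆ ℂ` with `0 ∉ U`. -/
def SolvesPIII' (v1 v2 : ℂ) (U : Set ℂ) (q p H : ℂ → ℂ) : Prop :=
  IsOpen U ∧ (0 : ℂ) ∉ U ∧
    DifferentiableOn ℂ q U ∧ DifferentiableOn ℂ p U ∧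
    (∀ s ∈ U, s * H s =
      q s ^ 2 * p s ^ 2 - (q s ^ 2 + v1 * q s - s) * p s
        + (1 / 2) * (v1 + v2) * q s) ∧
    (∀ s ∈ U, s * deriv q s = 2 * q s ^ 2 * p s - q s ^ 2 - v1 * q s + s) ∧
    (∀ s ∈ U, s * deriv p s =
      -2 * q s * p s ^ 2 + 2 * q s * p s + v1 * p s - (1 / 2) * (v1 + v2))

theorem HasDerivAt.comp_neg {𝕜 : Type*} [NontriviallyNormedField 𝕜] {f : 𝕜 → 𝕜} {f' x : 𝕜}
    (hf : HasDerivAt f f' (-x)) : HasDerivAt (fun t ↦ f (-t)) (-f') x := by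
  simpa [Function.comp_def] using hf.comp x (hasDerivAt_neg x)

open scoped Pointwise

noncomputable def backlundShift (v1 v2 x : ℂ) : ℂ := ((v1 + v2) / 2 - v1 * x) / (x * (x - 1))

-- Read off from `(x (x - 1) φ)' = -v1`, where `φ = backlundShift v1 v2`.
noncomputable def backlundShiftDeriv (v1 v2 x : ℂ) : ℂ :=
  (-v1 - (2 * x - 1) * backlundShift v1 v2 x) / (x * (x - 1))

theorem mul_backlundShift (v1 v2 : ℂ) {x : ℂ} (hx0 : x ≠ 0) (hx1 : x ≠ 1) :
    x * (x - 1) * backlundShift v1 v2 x = (v1 + v2) / 2 - v1 * x := by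
  have : x - 1 ≠ 0 := sub_ne_zero.2 hx1
  unfold backlundShift
  field_simp

theorem hasDerivAt_backlundShift {v1 v2 x : ℂ} (hx0 : x ≠ 0) (hx1 : x ≠ 1) :
    HasDerivAt (backlundShift v1 v2) (backlundShiftDeriv v1 v2 x) x := by
  have hx1' : x - 1 ≠ 0 := sub_ne_zero.2 hx1
  have h := (((hasDerivAt_id x).const_mul v1).const_sub ((v1 + v2) / 2)).div
    ((hasDerivAt_id x).mul ((hasDerivAt_id x).sub_const 1)) (mul_ne_zero hx0 hx1')
  refine h.congr_deriv ?_
  simp only [backlundShiftDeriv, backlundShift, id, Pi.mul_apply]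
  field_simp
  ring

namespace SolvesPIII'

variable {v1 v2 : ℂ} {U : Set ℂ} {q p H : ℂ → ℂ}

theorem of_hasDerivAt {q' p' : ℂ → ℂ} (hU : IsOpen U) (h0 : (0 : ℂ) ∉ U)
    (hq : ∀ s ∈ U, HasDerivAt q (q' s) s) (hp : ∀ s ∈ U, HasDerivAt p (p' s) s)
    (hH : ∀ s ∈ U, s * H s =
      q s ^ 2 * p s ^ 2 - (q s ^ 2 + v1 * q s - s) * p s + (1 / 2) * (v1 + v2) * q s)
    (hq' : ∀ s ∈ U, s * q' s = 2 * q s ^ 2 * p s - q s ^ 2 - v1 * q s + s)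
    (hp' : ∀ s ∈ U, s * p' s =
      -2 * q s * p s ^ 2 + 2 * q s * p s + v1 * p s - (1 / 2) * (v1 + v2)) :
    SolvesPIII' v1 v2 U q p H :=
  ⟨hU, h0, fun s hs ↦ (hq s hs).differentiableAt.differentiableWithinAt,
    fun s hs ↦ (hp s hs).differentiableAt.differentiableWithinAt, hH,
    fun s hs ↦ (hq s hs).deriv ▸ hq' s hs, fun s hs ↦ (hp s hs).deriv ▸ hp' s hs⟩

theorem hasDerivAt_q (h : SolvesPIII' v1 v2 U q p H) {s : ℂ} (hs : s ∈ U) :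
    HasDerivAt q (deriv q s) s :=
  ((h.2.2.1 s hs).differentiableAt (h.1.mem_nhds hs)).hasDerivAt

theorem hasDerivAt_p (h : SolvesPIII' v1 v2 U q p H) {s : ℂ} (hs : s ∈ U) :
    HasDerivAt p (deriv p s) s :=
  ((h.2.2.2.1 s hs).differentiableAt (h.1.mem_nhds hs)).hasDerivAt

theorem backlund_sMinus (h : SolvesPIII' v1 v2 U q p H) :
    SolvesPIII' v1 (-v2) (-U) (fun s ↦ -q (-s)) (fun s ↦ 1 - p (-s)) (fun s ↦ 1 - H (-s)) := by
  have ⟨hU, h0, _, _, hH, hq, hp⟩ := h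
  refine of_hasDerivAt (q' := fun s ↦ deriv q (-s)) (p' := fun s ↦ deriv p (-s))
    hU.neg (by simpa using h0) (fun s hs ↦ ?_) (fun s hs ↦ ?_) (fun s hs ↦ ?_)
    (fun s hs ↦ ?_) (fun s hs ↦ ?_)
  · simpa only [neg_neg] using (h.hasDerivAt_q hs).comp_neg.fun_neg
  · simpa only [sub_neg_eq_add, neg_neg] using (h.hasDerivAt_p hs).comp_neg.const_sub 1
  · linear_combination hH (-s) hs
  · linear_combination -hq (-s) hs
  · linear_combination -hp (-s) hs

theorem backlund_s2 (h : SolvesPIII' v1 v2 U q p H) (hp0 : ∀ s ∈ U, p s ≠ 0)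
    (hp1 : ∀ s ∈ U, p s ≠ 1) :
    SolvesPIII' (-v1) (-v2) U (fun s ↦ q s + backlundShift v1 v2 (p s)) p H := by
  have ⟨hU, h0, _, _, hH, hq, hp⟩ := h
  refine of_hasDerivAt (q' := fun s ↦ deriv q s + backlundShiftDeriv v1 v2 (p s) * deriv p s)
    (p' := deriv p) hU h0 (fun s hs ↦ ?_) (fun s hs ↦ h.hasDerivAt_p hs) (fun s hs ↦ ?_)
    (fun s hs ↦ ?_) (fun s hs ↦ ?_)
  · exact (h.hasDerivAt_q hs).add
      ((hasDerivAt_backlundShift (hp0 s hs) (hp1 s hs)).comp s (h.hasDerivAt_p hs))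
  all_goals
    have hφ := mul_backlundShift v1 v2 (hp0 s hs) (hp1 s hs)
    set φ := backlundShift v1 v2 (p s)
  · linear_combination hH s hs - (2 * q s + φ) * hφ
  · have hsp : s * deriv p s = -(p s * (p s - 1)) * (2 * q s + φ) := by
      linear_combination hp s hs + hφ
    have hcancel := div_mul_cancel₀ (-v1 - (2 * p s - 1) * φ)
      (mul_ne_zero (hp0 s hs) (sub_ne_zero.2 (hp1 s hs)))
    simp only [backlundShiftDeriv]
    linear_combination hq s hs + (-v1 - (2 * p s - 1) * φ) / (p s * (p s - 1)) * hsp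
      - (2 * q s + φ) * hcancel
  · linear_combination hp s hs + 2 * hφ

end SolvesPIII'

/-- Composite Bäcklund transformation `s₋s₂` for Painlevé III′: from a solution
with parameters `(v1, v2)` on `U` (with `p` avoiding `0` and `1`) one obtains a
solution with parameters `(−v1, v2)` on `−U` whose Hamiltonian satisfies
`(−s)·H̃(−s) = s·H(s) − s`. -/
theorem painleveIIIprime_backlund_sminus_s2 (v1 v2 : ℂ) (U : Set ℂ)
    (q p H : ℂ → ℂ)
    (hsol : SolvesPIII' v1 v2 U q p H)
    (hp0 : ∀ s ∈ U, p s ≠ 0)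
    (hp1 : ∀ s ∈ U, p s ≠ 1) :
    ∃ qt pt Ht : ℂ → ℂ,
      SolvesPIII' (-v1) v2 {s : ℂ | -s ∈ U} qt pt Ht ∧
      ∀ s ∈ U, (-s) * Ht (-s) = s * H s - s := by
  have h := (hsol.backlund_s2 hp0 hp1).backlund_sMinus
  rw [neg_neg] at h
  refine ⟨_, _, _, h, fun s _ ↦ ?_⟩
  simp only [neg_neg]
  ring
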